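/- If Γ is a finite connected graph with n edges and cycle rank ℓ, then the set A ⊂ ℤ^{n+1} consisting of the points (1, S⃗) for S the complement of a spanning tree and (0, T⃗) for T a monomial of the second Symanzik polynomial with mass terms (i.e., T⃗ = S⃗ + e_i for some spanning-tree complement S and edge i, together with cut monomials) lies on the affine hyperplane Σ_{i=0}^{n} x_i = ℓ + 1, and A generates the sublattice L = {x ∈ ℤ^{n+1} : (ℓ+1) | Σᵢ x_i}, which has index ℓ+1 in ℤ^{n+1}. -/

import Mathlib

open scoped Classical

/-- A finite multigraph on vertex type `V` with edge type `E` is given by an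
endpoint map `G : E → Sym2 V`. -/
structure Subgraph {V E : Type} [Fintype V] [Fintype E] [DecidableEq V] [DecidableEq E]
    (G : E → Sym2 V) where
  verts : Finset V
  edges : Finset E
  incl : ∀ e ∈ edges, ∀ v ∈ G e, v ∈ verts

variable {V E : Type} [Fintype V] [Fintype E] [DecidableEq V] [DecidableEq E]

/-- Number of connected components of a subgraph. -/
noncomputable def comps (G : E → Sym2 V) (H : Subgraph G) : ℕ :=
  Nat.card (Quot fun a b : {v : V // v ∈ H.verts} => ∃ e ∈ H.edges, G e = s(a.1, b.1))

/-- Cycle rank (first Betti number) `ℓ(H) = |E(H)| - |V(H)| + c(H)`. -/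
noncomputable def cycleRank (G : E → Sym2 V) (H : Subgraph G) : ℤ :=
  (H.edges.card : ℤ) - (H.verts.card : ℤ) + (comps G H : ℤ)

/-- The spanning subgraph with all vertices and edge set `S`. -/
def spanningSub (G : E → Sym2 V) (S : Finset E) : Subgraph G where
  verts := Finset.univ
  edges := S
  incl := fun _ _ v _ => Finset.mem_univ v

/-- `T` is (the edge set of) a spanning tree of `G`. -/
noncomputable def IsSpanningTree (G : E → Sym2 V) (T : Finset E) : Prop :=
  T.card + 1 = Fintype.card V ∧ comps G (spanningSub G T) = 1

/-- The graph `G` is connected. -/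
noncomputable def GraphConnected (G : E → Sym2 V) : Prop :=
  comps G (spanningSub G Finset.univ) = 1

/-- Real incidence vector of a set of edges. -/
def ind (S : Finset E) : E → ℝ := fun e => if e ∈ S then 1 else 0

/-- Integer incidence vector of a set of edges. -/
def indZ (S : Finset E) : E → ℤ := fun e => if e ∈ S then 1 else 0

/-- `C` is a cut of `G`: its complement is a spanning forest with exactly two
components (removing `C` disconnects the graph into two trees). -/
noncomputable def IsCut (G : E → Sym2 V) (C : Finset E) : Prop :=
  (Cᶜ).card + 2 = Fintype.card V ∧ comps G (spanningSub G Cᶜ) = 2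

/-- The set `A ⊂ ℤ^{n+1}` of exponent vectors: `(1, S⃗)` for complements `S` of spanning
trees (monomials of the first Symanzik polynomial) and `(0, T⃗)` for monomials of the
second Symanzik polynomial with mass terms, i.e. `T⃗ = S⃗ + e_i` (mass monomials) and
`T⃗ = 1_C` for cuts `C`. -/
noncomputable def symanzikPoints (G : E → Sym2 V) : Set (ℤ × (E → ℤ)) :=
  {p | ∃ T, IsSpanningTree G T ∧ p = (1, indZ Tᶜ)} ∪
  {p | ∃ T i, IsSpanningTree G T ∧ p = (0, indZ Tᶜ + Pi.single i 1)} ∪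
  {p | ∃ C, IsCut G C ∧ p = (0, indZ C)}

/-! Every point of `A` has coordinate sum `ℓ + 1`: the complement of a spanning tree has
`|E| - |V| + 1 = ℓ` edges and a cut has one more. Conversely, for a fixed spanning tree `T`,
the differences `(0, T⃗ᶜ + eᵢ) - (1, T⃗ᶜ) = (-1, eᵢ)` span the kernel of the coordinate sum, so
together with `(1, T⃗ᶜ)` they span the preimage of `(ℓ + 1)ℤ`, a subgroup of index `ℓ + 1`. -/

section Lattice

variable {ι : Type*} [Fintype ι]

def coordSum : (ℤ × (ι → ℤ)) →+ ℤ where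
  toFun x := x.1 + ∑ i, x.2 i
  map_zero' := by simp
  map_add' x y := by
    simp only [Prod.fst_add, Prod.snd_add, Pi.add_apply, Finset.sum_add_distrib]
    ring

theorem coordSum_apply (x : ℤ × (ι → ℤ)) : coordSum x = x.1 + ∑ i, x.2 i := rfl

theorem coordSum_surjective : Function.Surjective (coordSum (ι := ι)) :=
  fun n => ⟨(n, 0), by simp [coordSum_apply]⟩

theorem eq_sum_smul_of_coordSum_eq_zero [DecidableEq ι] {x : ℤ × (ι → ℤ)}
    (hx : coordSum x = 0) :
    x = ∑ i, x.2 i • ((-1 : ℤ), (Pi.single i 1 : ι → ℤ)) := by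
  refine Prod.ext ?_ ?_
  · simp only [Prod.fst_sum, Prod.smul_fst, smul_eq_mul, mul_neg_one, Finset.sum_neg_distrib]
    rw [coordSum_apply] at hx
    linarith
  · simp only [Prod.snd_sum, Prod.smul_snd, ← Pi.single_smul, smul_eq_mul, mul_one,
      Finset.univ_sum_single]

theorem closure_eq_comap_zmultiples [DecidableEq ι] {A : Set (ℤ × (ι → ℤ))} {d : ℤ}
    {p : ℤ × (ι → ℤ)} (hA : ∀ a ∈ A, coordSum a = d) (hp : p ∈ A)
    (hunit : ∀ i, ((-1 : ℤ), (Pi.single i 1 : ι → ℤ)) ∈ AddSubgroup.closure A) :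
    AddSubgroup.closure A = (AddSubgroup.zmultiples d).comap coordSum := by
  refine le_antisymm ((AddSubgroup.closure_le _).mpr fun a ha => ?_) fun x hx => ?_
  · simp [hA a ha]
  · obtain ⟨m, hm⟩ := AddSubgroup.mem_zmultiples_iff.mp hx
    have hker : coordSum (x - m • p) = 0 := by
      rw [map_sub, map_zsmul, hA p hp, ← hm, sub_self]
    rw [← sub_add_cancel x (m • p), eq_sum_smul_of_coordSum_eq_zero hker]
    exact add_mem (sum_mem fun i _ => zsmul_mem (hunit i) _)
      (zsmul_mem (AddSubgroup.subset_closure hp) m)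

end Lattice

theorem Nat.card_subtype_ne_add_one {X : Type*} [Finite X] (x : X) :
    Nat.card {y // y ≠ x} + 1 = Nat.card X := by
  classical
  have := Fintype.ofFinite X
  rw [Nat.card_eq_fintype_card, Nat.card_eq_fintype_card, Fintype.card_subtype_compl,
    Fintype.card_subtype_eq]
  have := Fintype.card_pos_iff.mpr ⟨x⟩
  omega

section EdgeRel

variable {α ι : Type*} (G : ι → Sym2 α)

def edgeRel (S : Finset ι) (a b : α) : Prop := ∃ e ∈ S, G e = s(a, b)

theorem edgeRel_mono {S S' : Finset ι} (h : S ⊆ S') : edgeRel G S ≤ edgeRel G S' :=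
  fun _ _ ⟨e, he, hab⟩ => ⟨e, h he, hab⟩

theorem eqvGen_edgeRel_le {S T : Finset ι}
    (h : ∀ e ∈ S, ∀ a b, G e = s(a, b) → Relation.EqvGen (edgeRel G T) a b) :
    Relation.EqvGen (edgeRel G S) ≤ Relation.EqvGen (edgeRel G T) := fun x y hxy =>
  (Equivalence.eqvGen_iff (Relation.EqvGen.is_equivalence _)).mp
    (Relation.EqvGen.mono (fun a b ⟨e, he, hab⟩ => h e he a b hab) x y hxy)

theorem card_quot_edgeRel_empty : Nat.card (Quot (edgeRel G ∅)) = Nat.card α := by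
  refine Nat.card_congr
    ⟨Quot.lift id fun _ _ ⟨e, he, _⟩ => absurd he (Finset.notMem_empty e), Quot.mk _,
      fun q => ?_, fun _ => rfl⟩
  induction q using Quot.ind
  rfl

/-- The quotient by the larger edge set is the old quotient with the class of `b` sent to that
of `a`. -/
theorem card_quot_edgeRel_insert [Finite α] [DecidableEq ι] {T : Finset ι} {e : ι} {a b : α}
    (hab : G e = s(a, b)) (hnr : ¬ Relation.EqvGen (edgeRel G T) a b) :
    Nat.card (Quot (edgeRel G (insert e T))) + 1 = Nat.card (Quot (edgeRel G T)) := by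
  set β : Quot (edgeRel G T) := Quot.mk _ b
  have hαβ : Quot.mk (edgeRel G T) a ≠ β := fun h => hnr (Quot.eq.mp h)
  let merge (q : Quot (edgeRel G T)) : {q // q ≠ β} :=
    if h : q = β then ⟨Quot.mk _ a, hαβ⟩ else ⟨q, h⟩
  have merge_mk : ∀ x y, edgeRel G (insert e T) x y →
      merge (Quot.mk _ x) = merge (Quot.mk _ y) := by
    rintro x y ⟨e', he', hxy⟩
    rcases Finset.mem_insert.mp he' with rfl | he'T
    · have hb : merge β = merge (Quot.mk _ a) := by simp [merge, hαβ]
      rcases Sym2.eq_iff.mp (hxy.symm.trans hab) with ⟨rfl, rfl⟩ | ⟨rfl, rfl⟩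
      exacts [hb.symm, hb]
    · exact congrArg merge (Quot.sound ⟨e', he'T, hxy⟩)
  let lift : Quot (edgeRel G T) → Quot (edgeRel G (insert e T)) :=
    Quot.mapRight (edgeRel_mono G (Finset.subset_insert e T))
  have hlift : lift (Quot.mk _ a) = lift β :=
    Quot.sound ⟨e, Finset.mem_insert_self e T, hab⟩
  have equiv : Quot (edgeRel G (insert e T)) ≃ {q // q ≠ β} := by
    refine ⟨Quot.lift (fun x => merge (Quot.mk _ x)) merge_mk, fun q => lift q.1, ?_, ?_⟩
    · intro q
      induction q using Quot.ind with | mk x => ?_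
      by_cases h : Quot.mk (edgeRel G T) x = β
      · simp only [merge, dif_pos h, hlift]
        exact (congrArg lift h).symm
      · simp only [merge, dif_neg h]
        rfl
    · rintro ⟨q, hq⟩
      induction q using Quot.ind with | mk x => ?_
      exact dif_neg hq
  have : Finite (Quot (edgeRel G T)) := Finite.of_surjective _ Quot.mk_surjective
  rw [Nat.card_congr equiv, Nat.card_subtype_ne_add_one]

end EdgeRel

theorem comps_spanningSub (G : E → Sym2 V) (S : Finset E) :
    comps G (spanningSub G S) = Nat.card (Quot (edgeRel G S)) :=
  Nat.card_congr (Quot.congr (Equiv.subtypeUnivEquiv fun v => Finset.mem_univ v)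
    fun _ _ => Iff.rfl)

/-- A forest `T` (one with `|V| - |T|` components) of maximal size is a spanning tree, since
otherwise an edge joining two of its components could be added. -/
theorem exists_isSpanningTree (G : E → Sym2 V) (hconn : GraphConnected G) :
    ∃ T, IsSpanningTree G T := by
  rw [GraphConnected, comps_spanningSub] at hconn
  obtain ⟨huniv, ⟨q⟩⟩ := Nat.card_eq_one_iff_unique.mp hconn
  let forests := Finset.univ.filter fun T : Finset E =>
    Nat.card (Quot (edgeRel G T)) + T.card = Fintype.card V
  obtain ⟨T, hT, hmax⟩ := forests.exists_max_image Finset.card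
    ⟨∅, by simp [forests, card_quot_edgeRel_empty, Nat.card_eq_fintype_card]⟩
  rw [Finset.mem_filter] at hT
  have hsat : ∀ e ∈ Finset.univ, ∀ a b, G e = s(a, b) → Relation.EqvGen (edgeRel G T) a b := by
    by_contra! ⟨e, -, a, b, hab, hnr⟩
    have heT : e ∉ T := fun he => hnr (.rel _ _ ⟨e, he, hab⟩)
    have hinsert := card_quot_edgeRel_insert G hab hnr
    have := hmax (insert e T) (Finset.mem_filter.mpr ⟨Finset.mem_univ _, by
      rw [Finset.card_insert_of_notMem heT]; omega⟩)
    rw [Finset.card_insert_of_notMem heT] at this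
    omega
  have hcomps : Nat.card (Quot (edgeRel G T)) = 1 := Nat.card_eq_one_iff_unique.mpr
    ⟨⟨fun x y => Quot.induction_on₂ x y fun a b => Quot.eq.mpr
      (eqvGen_edgeRel_le G hsat a b (Quot.eq.mp (huniv.allEq _ _)))⟩, ⟨Quot.mk _ q.out⟩⟩
  exact ⟨T, by omega, by rw [comps_spanningSub, hcomps]⟩

theorem sum_indZ (S : Finset E) : ∑ e, indZ S e = S.card := by
  simp [indZ, Finset.sum_ite_mem, Finset.univ_inter]

theorem cycleRank_univ (G : E → Sym2 V) (hconn : GraphConnected G) :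
    cycleRank G (spanningSub G Finset.univ) = Fintype.card E - Fintype.card V + 1 := by
  rw [cycleRank, hconn]
  rfl

theorem coordSum_of_mem_symanzikPoints (G : E → Sym2 V) (hconn : GraphConnected G)
    {p : ℤ × (E → ℤ)} (hp : p ∈ symanzikPoints G) :
    coordSum p = cycleRank G (spanningSub G Finset.univ) + 1 := by
  have hcompl (S : Finset E) : ((Sᶜ).card : ℤ) = Fintype.card E - S.card := by
    rw [Finset.card_compl, Nat.cast_sub (Finset.card_le_univ S)]
  rw [cycleRank_univ G hconn]
  rcases hp with (⟨T, hT, rfl⟩ | ⟨T, i, hT, rfl⟩) | ⟨C, hC, rfl⟩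
  · rw [coordSum_apply, sum_indZ, hcompl, ← hT.1]
    push_cast; ring
  · simp only [coordSum_apply, Pi.add_apply, Finset.sum_add_distrib, Finset.sum_pi_single',
      Finset.mem_univ, if_true, sum_indZ, hcompl, ← hT.1]
    push_cast; ring
  · have hC' := hcompl Cᶜ
    rw [compl_compl] at hC'
    rw [coordSum_apply, sum_indZ, hC', ← hC.1]
    push_cast; ring

theorem symanzik_lattice_general (G : E → Sym2 V) (hconn : GraphConnected G) :
    (∀ p ∈ symanzikPoints G,
        p.1 + ∑ e, p.2 e = cycleRank G (spanningSub G Finset.univ) + 1) ∧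
    (∀ x : ℤ × (E → ℤ), x ∈ AddSubgroup.closure (symanzikPoints G) ↔
        (cycleRank G (spanningSub G Finset.univ) + 1) ∣ (x.1 + ∑ e, x.2 e)) ∧
    (AddSubgroup.closure (symanzikPoints G)).index =
      (cycleRank G (spanningSub G Finset.univ)).toNat + 1 := by
  obtain ⟨T, hT⟩ := exists_isSpanningTree G hconn
  have hpoints : ∀ p ∈ symanzikPoints G, coordSum p = _ :=
    fun _ => coordSum_of_mem_symanzikPoints G hconn
  have htree : ((1 : ℤ), indZ Tᶜ) ∈ symanzikPoints G := Or.inl (Or.inl ⟨T, hT, rfl⟩)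
  have hunit (i : E) : ((-1 : ℤ), (Pi.single i 1 : E → ℤ)) ∈
      AddSubgroup.closure (symanzikPoints G) := by
    have hmass : ((0 : ℤ), indZ Tᶜ + Pi.single i 1) ∈ symanzikPoints G :=
      Or.inl (Or.inr ⟨T, i, hT, rfl⟩)
    simpa using sub_mem (AddSubgroup.subset_closure hmass) (AddSubgroup.subset_closure htree)
  have hL := closure_eq_comap_zmultiples hpoints htree hunit
  have hℓ : 0 ≤ cycleRank G (spanningSub G Finset.univ) := by
    have := hpoints _ htree
    rw [coordSum_apply, sum_indZ] at this
    omega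
  refine ⟨hpoints, fun x => ?_, ?_⟩
  · rw [hL, AddSubgroup.mem_comap, Int.mem_zmultiples_iff, coordSum_apply]
  · rw [hL, AddSubgroup.index_comap_of_surjective _ coordSum_surjective, Int.index_zmultiples]
    omega

/-- The points of `A` lie on the hyperplane `∑ᵢ xᵢ = ℓ + 1`, the lattice they generate
is `L = {x : (ℓ+1) ∣ ∑ᵢ xᵢ}`, and this sublattice has index `ℓ + 1` in `ℤ^{n+1}`. -/
theorem symanzik_lattice (G : E → Sym2 V) [Nonempty E] (hconn : GraphConnected G) :
    (∀ p ∈ symanzikPoints G,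
        p.1 + ∑ e, p.2 e = cycleRank G (spanningSub G Finset.univ) + 1) ∧
    (∀ x : ℤ × (E → ℤ), x ∈ AddSubgroup.closure (symanzikPoints G) ↔
        (cycleRank G (spanningSub G Finset.univ) + 1) ∣ (x.1 + ∑ e, x.2 e)) ∧
    (AddSubgroup.closure (symanzikPoints G)).index =
      (cycleRank G (spanningSub G Finset.univ)).toNat + 1 :=
  symanzik_lattice_general G hconn
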